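/- Let A be a Banach algebra over ℂ and let A# = A ⊕ ℂ be its unitization, with multiplication (a,λ)(b,μ) = (ab + λb + μa, λμ) and norm ‖(a,λ)‖ = ‖a‖ + |λ|. Then A is a WAP-algebra if and only if A# is a WAP-algebra. -/

import Mathlib

/-! A functional on `A♯` restricts along the contractive, multiplicative inclusion `A → A♯` to
one on `A`, and restriction is weakly continuous, so it keeps weak orbits relatively compact.
Conversely a WAP functional `g` on `A` lifts to `g ∘ snd` on `A♯`, whose translate by `(λ, a)` is
`λ • (g ∘ snd) + g a • fst + (g · a) ∘ snd`; the lifted orbit therefore lies in the continuous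
image of two discs times the weak closure of the orbit of `g`. The augmentation character `fst`
is WAP as well, and together with the lifts it bounds both summands of the ℓ¹-norm on `A♯` by the
WAP-seminorm. -/

noncomputable section
open Metric Set Function ContinuousLinearMap NormedSpace

section WAPDefs

variable (B : Type*) [NormedAddCommGroup B] [NormedSpace ℂ B]

/-- The set of weakly almost periodic functionals on a Banach space `B` equipped with a
continuous bilinear multiplication `m`: those `f` in the dual for which the orbit
`{f · a : ‖a‖ ≤ 1}` (where `(f · a)(b) = f (a * b)`) is relatively compact in the weak
topology `σ(B*, B**)` of the dual `B*`. -/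
def WAPset (m : B →L[ℂ] B →L[ℂ] B) : Set (StrongDual ℂ B) :=
  {f | IsCompact (closure
    ((fun a => toWeakSpace ℂ (StrongDual ℂ B) (f.comp (m a))) '' closedBall (0 : B) 1))}

/-- The WAP-seminorm `‖a‖_WAP = sup {|f a| : f ∈ WAP(B), ‖f‖ ≤ 1}`. -/
def wapNorm (m : B →L[ℂ] B →L[ℂ] B) (a : B) : ℝ :=
  sSup {r : ℝ | ∃ f ∈ WAPset B m, ‖f‖ ≤ 1 ∧ r = ‖f a‖}

/-- `B` (with multiplication `m`) is a WAP-algebra when the canonical map into `WAP(B)*`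
is bounded below, i.e. `sup {|f a| : f ∈ WAP(B), ‖f‖ ≤ 1} ≥ c ‖a‖` for some `c > 0`. -/
def IsWAPAlgebra (m : B →L[ℂ] B →L[ℂ] B) : Prop :=
  ∃ c > 0, ∀ a : B, c * ‖a‖ ≤ wapNorm B m a

/-- The canonical evaluation map from `B` into the dual of a subspace `X ⊆ B*`. -/
def dualEval (X : Submodule ℂ (StrongDual ℂ B)) (a : B) : StrongDual ℂ X :=
  (inclusionInDoubleDual ℂ B a).comp X.subtypeL

/-- `B` (with multiplication `m`) is a dual Banach algebra with predual `X`: `X` is a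
norm-closed subspace of `B*` which is a sub-bimodule for the actions `(f·b)(c) = f (b * c)`
and `(b·f)(c) = f (c * b)`, and the canonical evaluation map `B → X*` is an isometric
isomorphism. -/
structure IsDualBanachAlgebra (m : B →L[ℂ] B →L[ℂ] B)
    (X : Submodule ℂ (StrongDual ℂ B)) : Prop where
  closed : IsClosed (X : Set (StrongDual ℂ B))
  rmod : ∀ f ∈ X, ∀ b : B, f.comp (m b) ∈ X
  lmod : ∀ f ∈ X, ∀ b : B, f.comp (m.flip b) ∈ X
  isometric : ∀ b : B, @norm (StrongDual ℂ X) (@ContinuousLinearMap.hasOpNorm ℂ ℂ X ℂ _ _ _ _ _ _ _) (dualEval B X b) = ‖b‖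
  surjective : Function.Surjective (dualEval B X)

end WAPDefs

section Unitization

variable (A : Type*) [NonUnitalNormedRing A] [NormedSpace ℂ A]
  [IsScalarTower ℂ A A] [SMulCommClass ℂ A A]

set_option linter.unusedSectionVars false

/-- The unitization multiplication `(λ, a)(μ, b) = (λμ, λ•b + μ•a + a*b)` as a bilinear
map on `A♯ = ℂ ⊕ A`, where `A♯` carries the ℓ¹-norm `‖(λ, a)‖ = |λ| + ‖a‖`
(realized as `WithLp 1 (ℂ × A)`). -/
def unitizationMulBil : WithLp 1 (ℂ × A) →ₗ[ℂ] WithLp 1 (ℂ × A) →ₗ[ℂ] WithLp 1 (ℂ × A) :=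
  LinearMap.mk₂ ℂ
    (fun x y => (WithLp.equiv 1 (ℂ × A)).symm
      (x.fst * y.fst, x.fst • y.snd + y.fst • x.snd + x.snd * y.snd))
    (by
      intro x x' y
      apply (WithLp.equiv 1 (ℂ × A)).injective
      apply Prod.ext
      · simp [add_mul]
      · simp [add_smul, smul_add, add_mul]
        abel)
    (by
      intro c x y
      apply (WithLp.equiv 1 (ℂ × A)).injective
      apply Prod.ext
      · simp [mul_assoc]
      · simp [mul_smul, smul_add, smul_comm c, smul_mul_assoc])
    (by
      intro x y y'
      apply (WithLp.equiv 1 (ℂ × A)).injective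
      apply Prod.ext
      · simp [mul_add]
      · simp [smul_add, add_smul, mul_add]
        abel)
    (by
      intro c x y
      apply (WithLp.equiv 1 (ℂ × A)).injective
      apply Prod.ext
      · simp [mul_comm, mul_assoc, mul_left_comm]
      · simp [mul_smul, smul_comm c, smul_add, mul_smul_comm])

theorem unitizationMul_norm (x y : WithLp 1 (ℂ × A)) :
    ‖unitizationMulBil A x y‖ ≤ 1 * ‖x‖ * ‖y‖ := by
  have hx : ‖x‖ = ‖x.fst‖ + ‖x.snd‖ := by
    rw [WithLp.prod_norm_eq_add (by norm_num)]; norm_num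
  have hy : ‖y‖ = ‖y.fst‖ + ‖y.snd‖ := by
    rw [WithLp.prod_norm_eq_add (by norm_num)]; norm_num
  have hxy : ‖unitizationMulBil A x y‖
      = ‖x.fst * y.fst‖ + ‖x.fst • y.snd + y.fst • x.snd + x.snd * y.snd‖ := by
    rw [WithLp.prod_norm_eq_add (by norm_num)]; norm_num [unitizationMulBil]
  rw [hx, hy, hxy, one_mul]
  have h1 : ‖x.fst • y.snd + y.fst • x.snd + x.snd * y.snd‖
      ≤ ‖x.fst‖ * ‖y.snd‖ + ‖y.fst‖ * ‖x.snd‖ + ‖x.snd‖ * ‖y.snd‖ := by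
    refine le_trans (norm_add_le _ _) ?_
    gcongr
    · refine le_trans (norm_add_le _ _) ?_
      gcongr <;> simp [norm_smul]
    · exact norm_mul_le _ _
  have h0 : ‖x.fst * y.fst‖ ≤ ‖x.fst‖ * ‖y.fst‖ := norm_mul_le _ _
  nlinarith [norm_nonneg x.fst, norm_nonneg x.snd, norm_nonneg y.fst, norm_nonneg y.snd]

set_option linter.unusedSectionVars true

/-- The multiplication of the unitization `A♯` (with the ℓ¹-norm) as a continuous bilinear
map. -/
def unitizationMul : WithLp 1 (ℂ × A) →L[ℂ] WithLp 1 (ℂ × A) →L[ℂ] WithLp 1 (ℂ × A) :=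
  LinearMap.mkContinuous₂ (unitizationMulBil A) 1 (unitizationMul_norm A)

end Unitization

section WAP

variable {B : Type*} [NormedAddCommGroup B] [NormedSpace ℂ B] (m : B →L[ℂ] B →L[ℂ] B)

theorem mem_WAPset_of_forall_mem_isCompact {f : StrongDual ℂ B}
    {K : Set (WeakSpace ℂ (StrongDual ℂ B))} (hK : IsCompact K)
    (h : ∀ a ∈ closedBall (0 : B) 1, toWeakSpace ℂ _ (f.comp (m a)) ∈ K) : f ∈ WAPset B m :=
  hK.closure_of_subset <| by rintro _ ⟨a, ha, rfl⟩; exact h a ha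

theorem zero_mem_WAPset : (0 : StrongDual ℂ B) ∈ WAPset B m :=
  mem_WAPset_of_forall_mem_isCompact m (isCompact_singleton (x := 0)) fun a _ => by simp

theorem mem_WAPset_of_comp_eq_smul {f : StrongDual ℂ B} (hf : ∀ a, f.comp (m a) = f a • f) :
    f ∈ WAPset B m := by
  refine mem_WAPset_of_forall_mem_isCompact m
    ((isCompact_closedBall (0 : ℂ) ‖f‖).image (continuous_id.smul continuous_const))
    fun a ha => ⟨f a, ?_, by rw [hf, map_smul]; rfl⟩
  rw [mem_closedBall_zero_iff] at ha ⊢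
  simpa using f.le_opNorm_of_le ha

theorem comp_mem_WAPset_of_map_mul {C : Type*} [NormedAddCommGroup C] [NormedSpace ℂ C]
    {n : C →L[ℂ] C →L[ℂ] C} (J : B →L[ℂ] C) (hJ : ‖J‖ ≤ 1)
    (hmul : ∀ a b, n (J a) (J b) = J (m a b)) {f : StrongDual ℂ C} (hf : f ∈ WAPset C n) :
    f.comp J ∈ WAPset B m := by
  let T : StrongDual ℂ C →L[ℂ] StrongDual ℂ B := (compL ℂ B C ℂ).flip J
  refine mem_WAPset_of_forall_mem_isCompact m (hf.image (WeakSpace.map T).continuous)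
    fun a ha => ⟨_, subset_closure ⟨J a, ?_, rfl⟩, ?_⟩
  · rw [mem_closedBall_zero_iff] at ha ⊢
    simpa using (J.le_of_opNorm_le hJ a).trans (by simpa using ha)
  · show toWeakSpace ℂ _ (T _) = _
    congr 1
    ext b
    exact congrArg f (hmul a b)

theorem le_wapNorm {f : StrongDual ℂ B} (hf : f ∈ WAPset B m) (hf1 : ‖f‖ ≤ 1) (a : B) :
    ‖f a‖ ≤ wapNorm B m a :=
  le_csSup ⟨‖a‖, by rintro _ ⟨g, -, hg1, rfl⟩; simpa using g.le_of_opNorm_le hg1 a⟩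
    ⟨f, hf, hf1, rfl⟩

theorem wapNorm_le {a : B} {r : ℝ} (h : ∀ f ∈ WAPset B m, ‖f‖ ≤ 1 → ‖f a‖ ≤ r) :
    wapNorm B m a ≤ r :=
  csSup_le ⟨0, 0, zero_mem_WAPset m, by simp, by simp⟩ <| by
    rintro _ ⟨f, hf, hf1, rfl⟩; exact h f hf hf1

theorem wapNorm_apply_le_of_comp_mem {C : Type*} [NormedAddCommGroup C] [NormedSpace ℂ C]
    {n : C →L[ℂ] C →L[ℂ] C} (J : B →L[ℂ] C) (hJ : ‖J‖ ≤ 1)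
    (hcomp : ∀ f ∈ WAPset C n, f.comp J ∈ WAPset B m) (b : B) :
    wapNorm C n (J b) ≤ wapNorm B m b :=
  wapNorm_le n fun f hf hf1 =>
    le_wapNorm m (hcomp f hf) ((opNorm_comp_le f J).trans (by nlinarith [norm_nonneg J])) b

end WAP

section UnitizationMaps

variable (A : Type*) [NormedAddCommGroup A] [NormedSpace ℂ A]

def unitizationInr : A →L[ℂ] WithLp 1 (ℂ × A) :=
  (WithLp.prodContinuousLinearEquiv 1 ℂ ℂ A).symm.toContinuousLinearMap.comp (inr ℂ ℂ A)

variable {A}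

@[simp]
theorem norm_unitizationInr (a : A) : ‖unitizationInr A a‖ = ‖a‖ :=
  WithLp.norm_toLp_snd 1 ℂ A a

theorem norm_unitizationInr_le : ‖unitizationInr A‖ ≤ 1 :=
  opNorm_le_bound _ zero_le_one fun a => by simp

end UnitizationMaps

namespace WithLp

variable {p : ENNReal} [Fact (1 ≤ p)] {𝕜 α β : Type*} [NontriviallyNormedField 𝕜]
  [SeminormedAddCommGroup α] [NormedSpace 𝕜 α] [SeminormedAddCommGroup β] [NormedSpace 𝕜 β]

theorem norm_fstL_le_one : ‖fstL p 𝕜 α β‖ ≤ 1 :=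
  opNorm_le_bound _ zero_le_one fun x => by simpa using norm_fst_le (x := x)

theorem norm_sndL_le_one : ‖sndL p 𝕜 α β‖ ≤ 1 :=
  opNorm_le_bound _ zero_le_one fun x => by simpa using norm_snd_le (x := x)

end WithLp

section Unitization

variable {A : Type*} [NonUnitalNormedRing A] [NormedSpace ℂ A] [IsScalarTower ℂ A A]
  [SMulCommClass ℂ A A]

theorem unitizationMul_unitizationInr (a b : A) :
    unitizationMul A (unitizationInr A a) (unitizationInr A b) = unitizationInr A (a * b) :=
  WithLp.ofLp_injective 1 <| by
    ext <;> simp [unitizationMul, unitizationMulBil, unitizationInr]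

theorem fstL_comp_unitizationMul (x : WithLp 1 (ℂ × A)) :
    (WithLp.fstL 1 ℂ ℂ A).comp (unitizationMul A x) = x.fst • WithLp.fstL 1 ℂ ℂ A := by
  ext y
  simp [unitizationMul, unitizationMulBil]

theorem comp_sndL_comp_unitizationMul (g : StrongDual ℂ A) (x : WithLp 1 (ℂ × A)) :
    (g.comp (WithLp.sndL 1 ℂ ℂ A)).comp (unitizationMul A x) =
      x.fst • g.comp (WithLp.sndL 1 ℂ ℂ A) + g x.snd • WithLp.fstL 1 ℂ ℂ A +
        (g.comp (ContinuousLinearMap.mul ℂ A x.snd)).comp (WithLp.sndL 1 ℂ ℂ A) := by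
  ext y
  simp [unitizationMul, unitizationMulBil, mul_comm]

theorem fstL_mem_WAPset : WithLp.fstL 1 ℂ ℂ A ∈ WAPset _ (unitizationMul A) :=
  mem_WAPset_of_comp_eq_smul _ fstL_comp_unitizationMul

theorem comp_sndL_mem_WAPset {g : StrongDual ℂ A}
    (hg : g ∈ WAPset A (ContinuousLinearMap.mul ℂ A)) :
    g.comp (WithLp.sndL 1 ℂ ℂ A) ∈ WAPset _ (unitizationMul A) := by
  let T : StrongDual ℂ A →L[ℂ] StrongDual ℂ (WithLp 1 (ℂ × A)) :=
    (compL ℂ _ A ℂ).flip (WithLp.sndL 1 ℂ ℂ A)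
  let Ψ : ℂ × ℂ × WeakSpace ℂ (StrongDual ℂ A) → WeakSpace ℂ (StrongDual ℂ (WithLp 1 (ℂ × A))) :=
    fun p => p.1 • toWeakSpace ℂ _ (g.comp (WithLp.sndL 1 ℂ ℂ A)) +
      p.2.1 • toWeakSpace ℂ _ (WithLp.fstL 1 ℂ ℂ A) + WeakSpace.map T p.2.2
  have hΨ : Continuous Ψ := by fun_prop
  refine mem_WAPset_of_forall_mem_isCompact _ (((isCompact_closedBall (0 : ℂ) 1).prod
    ((isCompact_closedBall (0 : ℂ) ‖g‖).prod hg)).image hΨ) fun x hx => ?_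
  rw [mem_closedBall_zero_iff, WithLp.prod_norm_eq_of_L1] at hx
  have hfst : ‖x.fst‖ ≤ 1 := by linarith [norm_nonneg x.snd]
  have hsnd : ‖x.snd‖ ≤ 1 := by linarith [norm_nonneg x.fst]
  refine ⟨(x.fst, g x.snd, toWeakSpace ℂ _ (g.comp (ContinuousLinearMap.mul ℂ A x.snd))),
    ⟨?_, ?_, subset_closure ⟨x.snd, ?_, rfl⟩⟩, ?_⟩
  · rwa [mem_closedBall_zero_iff]
  · simpa using g.le_opNorm_of_le hsnd
  · rwa [mem_closedBall_zero_iff]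
  · rw [comp_sndL_comp_unitizationMul]
    rfl

theorem IsWAPAlgebra.unitization (hA : IsWAPAlgebra A (ContinuousLinearMap.mul ℂ A)) :
    IsWAPAlgebra (WithLp 1 (ℂ × A)) (unitizationMul A) := by
  obtain ⟨c, hc, h⟩ := hA
  refine ⟨min c 1 / 2, by positivity, fun x => ?_⟩
  have hfst : ‖x.fst‖ ≤ wapNorm _ (unitizationMul A) x := by
    simpa using le_wapNorm _ (f := WithLp.fstL 1 ℂ ℂ A) fstL_mem_WAPset
      WithLp.norm_fstL_le_one x
  have hsnd : c * ‖x.snd‖ ≤ wapNorm _ (unitizationMul A) x := by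
    refine (h x.snd).trans ?_
    simpa using wapNorm_apply_le_of_comp_mem _ (n := ContinuousLinearMap.mul ℂ A)
      (WithLp.sndL 1 ℂ ℂ A) WithLp.norm_sndL_le_one (fun _ => comp_sndL_mem_WAPset) x
  rw [WithLp.prod_norm_eq_of_L1]
  nlinarith [min_le_left c 1, min_le_right c 1, norm_nonneg x.fst, norm_nonneg x.snd]

theorem IsWAPAlgebra.of_unitization (hA : IsWAPAlgebra (WithLp 1 (ℂ × A)) (unitizationMul A)) :
    IsWAPAlgebra A (ContinuousLinearMap.mul ℂ A) := by
  obtain ⟨c, hc, h⟩ := hA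
  refine ⟨c, hc, fun a => ?_⟩
  calc c * ‖a‖ = c * ‖unitizationInr A a‖ := by rw [norm_unitizationInr]
    _ ≤ wapNorm _ (unitizationMul A) (unitizationInr A a) := h _
    _ ≤ wapNorm A (ContinuousLinearMap.mul ℂ A) a :=
      wapNorm_apply_le_of_comp_mem _ (n := unitizationMul A) (unitizationInr A)
        norm_unitizationInr_le (fun _ => comp_mem_WAPset_of_map_mul _ (n := unitizationMul A)
          (unitizationInr A) norm_unitizationInr_le unitizationMul_unitizationInr) a

end Unitization

theorem isWAPAlgebra_unitization_iff_general (A : Type*) [NonUnitalNormedRing A] [NormedSpace ℂ A] [IsScalarTower ℂ A A] [SMulCommClass ℂ A A] :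
    IsWAPAlgebra A (ContinuousLinearMap.mul ℂ A) ↔
      IsWAPAlgebra (WithLp 1 (ℂ × A)) (unitizationMul A) :=
  ⟨IsWAPAlgebra.unitization, IsWAPAlgebra.of_unitization⟩

/-- A Banach algebra `A` is a WAP-algebra iff its unitization `A♯ = A ⊕ ℂ` (with the ℓ¹
norm `‖(a, λ)‖ = ‖a‖ + |λ|` and multiplication `(a,λ)(b,μ) = (ab + λb + μa, λμ)`) is a
WAP-algebra. -/
theorem isWAPAlgebra_unitization_iff (A : Type*) [NonUnitalNormedRing A] [NormedSpace ℂ A] [IsScalarTower ℂ A A] [SMulCommClass ℂ A A] [CompleteSpace A] :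
    IsWAPAlgebra A (ContinuousLinearMap.mul ℂ A) ↔
      IsWAPAlgebra (WithLp 1 (ℂ × A)) (unitizationMul A) :=
  isWAPAlgebra_unitization_iff_general A
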